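/- Let G be a locally finite graph on a vertex set X, let Δ ≥ 1 and s be natural numbers, and let X = U_0 ⊔ ⋯ ⊔ U_{s−1} ⊔ V be a partition such that the restrictions of G^{≤10Δ+1} to each U_j (j < s) and to V are component finite. Then for every i < Δ, the restriction of G to X ∖ ⋃_{j<s} E(U_j, 5i) is component finite. -/

import Mathlib

open MeasureTheory Set

/-- The restriction of a graph to a set of vertices, viewed as a graph on the same
vertex set (vertices outside the set become isolated). -/
def SimpleGraph.restrictSet {X : Type*} (G : SimpleGraph X) (C : Set X) : SimpleGraph X where
  Adj x y := G.Adj x y ∧ x ∈ C ∧ y ∈ C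
  symm := ⟨fun x y ⟨h, hx, hy⟩ => ⟨h.symm, hy, hx⟩⟩
  loopless := ⟨fun x h => G.loopless.irrefl x h.1⟩

/-- A graph is component finite if all its connected components are finite. -/
def SimpleGraph.ComponentFinite {X : Type*} (G : SimpleGraph X) : Prop :=
  ∀ x : X, {y | G.Reachable x y}.Finite

/-- `G^{≤r}`: distinct points are adjacent iff their `G`-path-distance is at most `r`. -/
def SimpleGraph.distLE {X : Type*} (G : SimpleGraph X) (r : ℕ) : SimpleGraph X where
  Adj x y := x ≠ y ∧ G.Reachable x y ∧ G.dist x y ≤ r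
  symm := by
    refine ⟨?_⟩
    intro x y ⟨h1, h2, h3⟩
    exact ⟨h1.symm, h2.symm, by rwa [SimpleGraph.dist_comm]⟩
  loopless := ⟨fun x h => h.1 rfl⟩

/-- `B(U, r)`: the set of vertices at `G`-path-distance at most `r` from `U`. -/
def SimpleGraph.setBall {X : Type*} (G : SimpleGraph X) (U : Set X) (r : ℕ) : Set X :=
  {x | ∃ u ∈ U, G.Reachable x u ∧ G.dist x u ≤ r}

/-- `E(U, r)`: the set of vertices at `G`-path-distance exactly `r` from `U`. -/
def SimpleGraph.sphere {X : Type*} (G : SimpleGraph X) (U : Set X) (r : ℕ) : Set X :=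
  {x | x ∈ G.setBall U r ∧ ∀ r' < r, x ∉ G.setBall U r'}

/-- A graph on a measurable space is Borel if its edge set is Borel. -/
def SimpleGraph.BorelGraph {X : Type*} [MeasurableSpace X] (G : SimpleGraph X) : Prop :=
  MeasurableSet {p : X × X | G.Adj p.1 p.2}

/-- A graph is bipartite if the vertex set splits into two parts such that every
edge joins the two parts. -/
def SimpleGraph.Bipartite {X : Type*} (G : SimpleGraph X) : Prop :=
  ∃ A : Set X, ∀ x y, G.Adj x y → (x ∈ A ↔ y ∉ A)

/-- A set is `G`-invariant if it is a union of connected components of `G`. -/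
def SimpleGraph.InvariantSet {X : Type*} (G : SimpleGraph X) (C : Set X) : Prop :=
  ∀ x ∈ C, ∀ y, G.Reachable x y → y ∈ C

/-- `c` is a proper edge coloring of `G`: it is symmetric and any two distinct
edges sharing a vertex receive distinct colors. -/
def SimpleGraph.IsProperEdgeColoring {X κ : Type*} (G : SimpleGraph X) (c : X × X → κ) : Prop :=
  (∀ x y, c (x, y) = c (y, x)) ∧
  ∀ x y z, G.Adj x y → G.Adj x z → y ≠ z → c (x, y) ≠ c (x, z)

/-- A Borel matching in `G`: a Borel, symmetric set of edges of `G` that are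
pairwise vertex-disjoint. -/
def SimpleGraph.IsBorelMatching {X : Type*} [MeasurableSpace X] (G : SimpleGraph X)
    (M : Set (X × X)) : Prop :=
  MeasurableSet M ∧ (∀ p ∈ M, G.Adj p.1 p.2) ∧ (∀ x y, (x, y) ∈ M → (y, x) ∈ M) ∧
    ∀ x y z, (x, y) ∈ M → (x, z) ∈ M → y = z

/-- `asi(G) ≤ s`: for every `r` there are Borel sets `U_0, …, U_s` covering the
vertex set such that `G^{≤r}` restricted to each `U_i` is component finite. -/
def SimpleGraph.AsiLE {X : Type*} [MeasurableSpace X] (G : SimpleGraph X) (s : ℕ) : Prop :=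
  ∀ r : ℕ, ∃ U : Fin (s + 1) → Set X, (∀ i, MeasurableSet (U i)) ∧ (⋃ i, U i) = Set.univ ∧
    ∀ i, ((G.distLE r).restrictSet (U i)).ComponentFinite

/-- `G` is `μ`-hyperfinite: some `G`-invariant `μ`-conull Borel set `Y` is such that
`G` restricted to `Y` is an increasing union of component finite Borel graphs. -/
def SimpleGraph.MuHyperfinite {X : Type*} [MeasurableSpace X] (G : SimpleGraph X)
    (μ : Measure X) : Prop :=
  ∃ Y : Set X, MeasurableSet Y ∧ μ Yᶜ = 0 ∧ G.InvariantSet Y ∧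
    ∃ H : ℕ → SimpleGraph X, Monotone H ∧ (∀ n, (H n).BorelGraph) ∧
      (∀ n, (H n).ComponentFinite) ∧ ∀ x y, (G.restrictSet Y).Adj x y ↔ ∃ n, (H n).Adj x y

/-- A connected component (of the induced graph on the component of `x`) has exactly two ends. -/
def SimpleGraph.ComponentTwoEnded {X : Type*} (G : SimpleGraph X) (x : X) : Prop :=
  Nat.card (SimpleGraph.end (G.induce {y | G.Reachable x y})) = 2

/-- triangle inequality for dist under reachability -/
lemma dist_tri {X : Type*} (G : SimpleGraph X) {u v w : X}
    (h1 : G.Reachable u v) (h2 : G.Reachable v w) :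
    G.dist u w ≤ G.dist u v + G.dist v w := by
  obtain ⟨p, hp⟩ := h1.exists_walk_length_eq_dist
  obtain ⟨q, hq⟩ := h2.exists_walk_length_eq_dist
  calc G.dist u w ≤ (p.append q).length := G.dist_le _
    _ = _ := by rw [SimpleGraph.Walk.length_append, hp, hq]

/-- balls in locally finite graphs are finite -/
lemma ball_fin {X : Type*} (G : SimpleGraph X) (hfin : ∀ v, (G.neighborSet v).Finite)
    (x : X) (r : ℕ) : {y | G.Reachable x y ∧ G.dist x y ≤ r}.Finite := by
  have key : ∀ r : ℕ, {y | ∃ p : G.Walk x y, p.length ≤ r}.Finite := by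
    intro r
    induction r with
    | zero =>
      apply Set.Finite.subset (Set.finite_singleton x)
      rintro y ⟨p, hp⟩
      have := p.eq_of_length_eq_zero (Nat.le_zero.mp hp)
      simp [this]
    | succ r ih =>
      apply Set.Finite.subset (ih.union (Set.Finite.biUnion ih (fun z _ => hfin z)))
      rintro y ⟨p, hp⟩
      rcases Nat.lt_or_ge p.length (r+1) with h | h
      · exact Or.inl ⟨p, Nat.lt_succ_iff.mp h⟩
      · cases hpr : p.reverse with
        | nil => exact Or.inl ⟨SimpleGraph.Walk.nil, by simp⟩
        | cons ha q =>
          refine Or.inr (Set.mem_biUnion (⟨q.reverse, ?_⟩ : _ ∈ {y | ∃ p : G.Walk x y, p.length ≤ r}) ha.symm)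
          have h1 : p.reverse.length = p.length := SimpleGraph.Walk.length_reverse p
          rw [hpr] at h1
          simp only [SimpleGraph.Walk.length_cons] at h1
          rw [SimpleGraph.Walk.length_reverse]
          omega
  apply Set.Finite.subset (key r)
  rintro y ⟨hr, hd⟩
  obtain ⟨p, hp⟩ := hr.exists_walk_length_eq_dist
  exact ⟨p, by omega⟩

/-- If `X = U 0 ⊔ ⋯ ⊔ U (s-1) ⊔ V` is a partition such that `G^{≤10Δ+1}` restricted to
each `U j` and to `V` is component finite, then for every `i < Δ`, the restriction of
`G` to the complement of `⋃ j, E(U j, 5i)` is component finite. -/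
theorem componentFinite_compl_spheres {X : Type*} (G : SimpleGraph X)
    (hfin : ∀ v, (G.neighborSet v).Finite) (Δ s : ℕ) (hΔ : 1 ≤ Δ)
    (U : Fin s → Set X) (V : Set X)
    (hdisjU : Pairwise (Function.onFun Disjoint U)) (hdisjV : ∀ j, Disjoint (U j) V)
    (hcover : (⋃ j, U j) ∪ V = Set.univ)
    (hU : ∀ j, ((G.distLE (10 * Δ + 1)).restrictSet (U j)).ComponentFinite)
    (hV : ((G.distLE (10 * Δ + 1)).restrictSet V).ComponentFinite) :
    ∀ i < Δ, (G.restrictSet (⋃ j, G.sphere (U j) (5 * i))ᶜ).ComponentFinite := by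
  intro i hi x
  set W : Set X := (⋃ j, G.sphere (U j) (5 * i))ᶜ with hWdef
  -- basic facts
  have memW : ∀ a b : X, ((G.restrictSet W).Walk a b) → a ∈ W → b ∈ W := by
    intro a b p
    induction p with
    | nil => exact id
    | cons h q ih => exact fun _ => ih h.2.2
  by_cases hx : x ∈ W
  swap
  · -- x is isolated in the restricted graph
    apply Set.Finite.subset (Set.finite_singleton x)
    rintro y ⟨p⟩
    cases p with
    | nil => exact rfl
    | cons h q => exact absurd h.2.1 hx
  -- avoidance lemma
  have avoid : ∀ y ∈ W, ∀ j, y ∈ G.setBall (U j) (5 * i) →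
      ∃ u ∈ U j, G.Reachable y u ∧ G.dist y u + 1 ≤ 5 * i := by
    intro y hy j hb
    have hns : y ∉ G.sphere (U j) (5 * i) := by
      intro h
      exact hy (Set.mem_iUnion.mpr ⟨j, h⟩)
    simp only [SimpleGraph.sphere, Set.mem_setOf_eq] at hns
    push_neg at hns
    obtain ⟨r', hr', hball⟩ := hns hb
    obtain ⟨u, huU, hru, hdu⟩ := hball
    exact ⟨u, huU, hru, by omega⟩
  have adj_dist_le : ∀ a b : X, G.Adj a b → G.dist a b ≤ 1 := by
    intro a b h
    have := G.dist_le (SimpleGraph.Walk.cons h SimpleGraph.Walk.nil)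
    simpa using this
  by_cases hcase : ∀ y, (G.restrictSet W).Reachable x y → ∀ j, y ∉ U j
  · -- component contained in V
    have hyV : ∀ y, (G.restrictSet W).Reachable x y → y ∈ V := by
      intro y hy
      have : y ∈ (⋃ j, U j) ∪ V := hcover ▸ Set.mem_univ y
      rcases this with h | h
      · obtain ⟨_, ⟨j, rfl⟩, hj⟩ := h
        exact absurd hj (hcase y hy j)
      · exact h
    have map : ∀ a b : X, ((G.restrictSet W).Walk a b) →
        (G.restrictSet W).Reachable x a →
        ((G.distLE (10 * Δ + 1)).restrictSet V).Reachable a b := by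
      intro a b p
      induction p with
      | nil => exact fun _ => SimpleGraph.Reachable.refl _
      | @cons a c b h q ih =>
        intro hxa
        have hxc : (G.restrictSet W).Reachable x c := hxa.trans ⟨h.toWalk⟩
        refine (SimpleGraph.Adj.reachable ?_).trans (ih hxc)
        exact ⟨⟨h.1.ne, ⟨h.1.toWalk⟩, le_trans (adj_dist_le a c h.1) (by omega)⟩,
          hyV a hxa, hyV c hxc⟩
    apply Set.Finite.subset (hV x)
    rintro y ⟨p⟩
    exact map x y p (SimpleGraph.Reachable.refl x)
  · -- component meets some U j
    push_neg at hcase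
    obtain ⟨w, hwreach, j, hwU⟩ := hcase
    set H := (G.distLE (10 * Δ + 1)).restrictSet (U j) with hHdef
    have hwW : w ∈ W := by
      obtain ⟨p⟩ := hwreach
      exact memW x w p hx
    set P : X → Prop := fun y => ∃ u ∈ U j, H.Reachable w u ∧ G.Reachable y u ∧
      G.dist y u + 1 ≤ 5 * i with hPdef
    have step : ∀ a b : X, (G.restrictSet W).Adj a b → P a → P b := by
      rintro a b hab ⟨u, huU, hwu, hau, hd⟩
      have hbW : b ∈ W := hab.2.2
      have hba : G.Reachable b a := (SimpleGraph.Adj.reachable hab.1.symm)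
      have hbu : G.Reachable b u := hba.trans hau
      have hdb : G.dist b u ≤ 5 * i := by
        have := dist_tri G hba hau
        have h1 := adj_dist_le b a hab.1.symm
        omega
      obtain ⟨u', hu'U, hbu', hd'⟩ := avoid b hbW j ⟨u, huU, hbu, hdb⟩
      refine ⟨u', hu'U, ?_, hbu', hd'⟩
      by_cases huu : u = u'
      · exact huu ▸ hwu
      · refine hwu.trans (SimpleGraph.Adj.reachable ?_)
        have hru' : G.Reachable u u' := hau.symm.trans (hba.symm.trans hbu')
        have hduu : G.dist u u' ≤ 10 * Δ + 1 := by
          have t1 := dist_tri G hau.symm (hba.symm.trans hbu')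
          have t2 := dist_tri G hba.symm hbu'
          have h1 := adj_dist_le a b hab.1
          have h2 : G.dist u a = G.dist a u := G.dist_comm
          omega
        exact ⟨⟨huu, hru', hduu⟩, huU, hu'U⟩
    have main : ∀ a b : X, ((G.restrictSet W).Walk a b) → P a → P b := by
      intro a b p
      induction p with
      | nil => exact id
      | cons h q ih => exact fun pa => ih (step _ _ h pa)
    have Pw : P w := by
      obtain ⟨u0, hu0U, hwu0, hd0⟩ := avoid w hwW j
        ⟨w, hwU, SimpleGraph.Reachable.refl w, by simp [SimpleGraph.dist_self]⟩
      refine ⟨u0, hu0U, ?_, hwu0, hd0⟩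
      by_cases hwu : w = u0
      · exact hwu ▸ SimpleGraph.Reachable.refl _
      · exact SimpleGraph.Adj.reachable ⟨⟨hwu, hwu0, by omega⟩, hwU, hu0U⟩
    apply Set.Finite.subset (Set.Finite.biUnion (hU j w)
      (fun u _ => ball_fin G hfin u (5 * i - 1)))
    intro y hy
    have hwy : (G.restrictSet W).Reachable w y := hwreach.symm.trans hy
    obtain ⟨p⟩ := hwy
    obtain ⟨u, huU, hwu, hyu, hd⟩ := main w y p Pw
    refine Set.mem_biUnion hwu ⟨hyu.symm, ?_⟩
    have : G.dist u y = G.dist y u := G.dist_comm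
    omega
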